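/- arXiv:2502.10935 — 7 statements merged into one kernel-verified Lean document; each statement's English description precedes it below -/
import Mathlib

section
/- The matrix W_m, defined as the sum of the lower triangular matrix L_m with entries (L_m)_{ij} = C(i, i-j) p^{i-j} q^{j+1} and the upper triangular matrix U_m with entries (U_m)_{ij} = C(m-i, j-i) p^{m+1-j} q^{j-i} (for 0 ≤ i,j ≤ m, with binomial coefficients equal to 0 when the lower index exceeds the upper index), is column-stochastic: every column of W_m sums to 1. -/
/-!
Column `j` of `L_m` sums to `q^(j+1) ∑_{k ≤ m-j} C(j+k, k) p^k`, the probability that in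
independent trials with success probability `p` at most `m - j` successes precede the
`(j+1)`-st failure. Column `j` of `U_m` sums to the same expression with the roles of `p, q`
and of `j, m - j` exchanged, i.e. the probability that at most `j` failures precede the
`(m-j+1)`-st success. Exactly one of the two events happens, so the two sums add up to `1`;
algebraically this is an induction on `m - j` driven by Pascal's rule.
-/

open Finset Matrix

section ColumnSums

variable {M : Type*} [AddCommMonoid M]

theorem sum_fin_ite_le_eq_sum_range_add (f : ℕ → M) (s n : ℕ) :
    ∑ i : Fin n, (if s ≤ (i : ℕ) then f i else 0) = ∑ k ∈ range (n - s), f (s + k) := by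
  rw [Fin.sum_univ_eq_sum_range (fun i ↦ if s ≤ i then f i else 0), ← sum_filter,
    range_eq_Ico, Ico_filter_le_of_left_le (Nat.zero_le s), sum_Ico_eq_sum_range]

theorem sum_fin_ite_le_eq_sum_range_sub (f : ℕ → M) {s n : ℕ} (hs : s < n) :
    ∑ i : Fin n, (if (i : ℕ) ≤ s then f i else 0) = ∑ k ∈ range (s + 1), f (s - k) := by
  have hfilter : {i ∈ range n | i ≤ s} = range (s + 1) := by
    ext
    simp only [mem_filter, mem_range]
    omega
  rw [Fin.sum_univ_eq_sum_range (fun i ↦ if i ≤ s then f i else 0), ← sum_filter, hfilter,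
    ← sum_range_reflect]
  simp only [add_tsub_cancel_right]

end ColumnSums

section NegativeBinomial

variable {R : Type*}

/-- With success probability `p` and failure probability `q`, the probability that at most `t`
successes occur before the `(s+1)`-st failure. -/
def negBinomialCDF [CommSemiring R] (p q : R) (s t : ℕ) : R :=
  q ^ (s + 1) * ∑ k ∈ range (t + 1), ((s + k).choose k : R) * p ^ k

section CommSemiring

variable [CommSemiring R] (p q : R)

theorem sum_lower_column {s n : ℕ} (hs : s ≤ n) :
    ∑ i : Fin (n + 1), (if s ≤ (i : ℕ) then ((i : ℕ).choose ((i : ℕ) - s) : R)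
        * p ^ ((i : ℕ) - s) * q ^ (s + 1) else 0) = negBinomialCDF p q s (n - s) := by
  rw [sum_fin_ite_le_eq_sum_range_add
      (fun i ↦ (i.choose (i - s) : R) * p ^ (i - s) * q ^ (s + 1)),
    negBinomialCDF, mul_sum, show n + 1 - s = n - s + 1 by omega]
  refine sum_congr rfl fun k _ ↦ ?_
  rw [add_tsub_cancel_left]
  ring

theorem sum_upper_column {s n : ℕ} (hs : s ≤ n) :
    ∑ i : Fin (n + 1), (if (i : ℕ) ≤ s then ((n - (i : ℕ)).choose (s - (i : ℕ)) : R)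
        * p ^ (n + 1 - s) * q ^ (s - (i : ℕ)) else 0) = negBinomialCDF q p (n - s) s := by
  rw [sum_fin_ite_le_eq_sum_range_sub
      (fun i ↦ ((n - i).choose (s - i) : R) * p ^ (n + 1 - s) * q ^ (s - i)) (by omega),
    negBinomialCDF, mul_sum]
  refine sum_congr rfl fun k hk ↦ ?_
  rw [mem_range] at hk
  rw [show n - (s - k) = n - s + k by omega, show s - (s - k) = k by omega,
    show n + 1 - s = n - s + 1 by omega]
  ring

end CommSemiring

section CommRing

variable [CommRing R] {p q : R}

theorem mul_sum_choose_succ_add_pow_mul_choose (h : p + q = 1) (t s : ℕ) :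
    p * ∑ k ∈ range (s + 1), ((t + 1 + k).choose k : R) * q ^ k
      + q ^ (s + 1) * ((s + (t + 1)).choose s : R)
    = ∑ k ∈ range (s + 1), ((t + k).choose k : R) * q ^ k := by
  induction s with
  | zero => simpa using h
  | succ s ih =>
    rw [sum_range_succ, sum_range_succ (fun k ↦ ((t + k).choose k : R) * q ^ k), ← ih,
      show t + 1 + (s + 1) = s + (t + 1) + 1 by omega,
      show s + 1 + (t + 1) = s + (t + 1) + 1 by omega, show t + (s + 1) = s + (t + 1) by omega]
    have pascal : ((s + (t + 1) + 1).choose (s + 1) : R)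
        = ((s + (t + 1)).choose s : R) + ((s + (t + 1)).choose (s + 1) : R) := by
      rw [Nat.choose_succ_succ', Nat.cast_add]
    linear_combination
      q ^ (s + 1) * ((s + (t + 1) + 1).choose (s + 1) : R) * h + q ^ (s + 1) * pascal

theorem negBinomialCDF_add_negBinomialCDF_swap (h : p + q = 1) (s t : ℕ) :
    negBinomialCDF p q s t + negBinomialCDF q p t s = 1 := by
  unfold negBinomialCDF
  induction t with
  | zero =>
    have hp : p = 1 - q := by linear_combination h
    simp [hp, mul_neg_geom_sum]
  | succ t ih =>
    rw [sum_range_succ, ← Nat.choose_symm_add]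
    linear_combination ih + p ^ (t + 1) * mul_sum_choose_succ_add_pow_mul_choose h t s

end CommRing

end NegativeBinomial

theorem Wm_column_stochastic_general (p : ℝ) (q : ℝ) (hq : q = 1 - p)
    (m : ℕ)
    (L U W : Matrix (Fin (m + 1)) (Fin (m + 1)) ℝ)
    (hL : ∀ i j : Fin (m + 1),
      L i j = if (j : ℕ) ≤ (i : ℕ) then ((i : ℕ).choose ((i : ℕ) - (j : ℕ)) : ℝ)
        * p ^ ((i : ℕ) - (j : ℕ)) * q ^ ((j : ℕ) + 1) else 0)
    (hU : ∀ i j : Fin (m + 1),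
      U i j = if (i : ℕ) ≤ (j : ℕ) then ((m - (i : ℕ)).choose ((j : ℕ) - (i : ℕ)) : ℝ)
        * p ^ (m + 1 - (j : ℕ)) * q ^ ((j : ℕ) - (i : ℕ)) else 0)
    (hW : W = L + U) :
    ∀ j : Fin (m + 1), ∑ i : Fin (m + 1), W i j = 1 := by
  intro j
  simp only [hW, Matrix.add_apply, sum_add_distrib, hL, hU]
  rw [sum_lower_column p q j.is_le, sum_upper_column p q j.is_le]
  exact negBinomialCDF_add_negBinomialCDF_swap (by rw [hq]; ring) _ _

/-- `W_m = L_m + U_m` is column-stochastic: every column sums to 1. -/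
theorem Wm_column_stochastic (p : ℝ) (hp : p ∈ Set.Ioo (0:ℝ) 1) (q : ℝ) (hq : q = 1 - p)
    (m : ℕ) (hm : 1 ≤ m)
    (L U W : Matrix (Fin (m + 1)) (Fin (m + 1)) ℝ)
    (hL : ∀ i j : Fin (m + 1),
      L i j = if (j : ℕ) ≤ (i : ℕ) then ((i : ℕ).choose ((i : ℕ) - (j : ℕ)) : ℝ)
        * p ^ ((i : ℕ) - (j : ℕ)) * q ^ ((j : ℕ) + 1) else 0)
    (hU : ∀ i j : Fin (m + 1),
      U i j = if (i : ℕ) ≤ (j : ℕ) then ((m - (i : ℕ)).choose ((j : ℕ) - (i : ℕ)) : ℝ)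
        * p ^ (m + 1 - (j : ℕ)) * q ^ ((j : ℕ) - (i : ℕ)) else 0)
    (hW : W = L + U) :
    ∀ j : Fin (m + 1), ∑ i : Fin (m + 1), W i j = 1 :=
  Wm_column_stochastic_general p q hq m L U W hL hU hW
end

section
/- For the lower triangular matrix L_m, the sum of the entries in column j equals the sum of the entries in column j-1 minus C(m+1, m-j+1) p^{m-j+1} q^{j}, for 1 ≤ j ≤ m. -/
/-!
Column `c` of `L_m` sums to `q^(c+1) * ∑_{k ≤ m-c} C(k+c, k) p^k`. Since `q = 1 - p`, passing from
column `c` to column `c+1` multiplies such a partial sum by `1 - p`, which telescopes by Pascal's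
rule `C(k+c+1, k) = C(k+c, k) + C(k+c, k-1)` and leaves a single boundary term.
-/

open Finset

theorem one_sub_mul_sum_range_choose_mul_pow {R : Type*} [CommRing R] (x : R) (c n : ℕ) :
    (1 - x) * ∑ k ∈ range (n + 1), ((k + c + 1).choose k : R) * x ^ k
      = ∑ k ∈ range (n + 2), ((k + c).choose k : R) * x ^ k
        - ((n + c + 2).choose (n + 1) : R) * x ^ (n + 1) := by
  induction n with
  | zero =>
    simp only [zero_add, sum_range_succ, range_one, sum_singleton, Nat.choose_zero_right,
      Nat.choose_one_right, Nat.cast_one, Nat.cast_add, Nat.cast_ofNat, pow_zero, pow_one, mul_one]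
    ring
  | succ n ih =>
    rw [sum_range_succ, mul_add, ih, sum_range_succ _ (n + 2),
      show n + 1 + c + 2 = n + c + 2 + 1 by ring, Nat.choose_succ_succ (n + c + 2) (n + 1),
      show n + 1 + c + 1 = n + c + 2 by ring, show n + 2 + c = n + c + 2 by ring]
    push_cast [Nat.succ_eq_add_one]
    ring

theorem sum_range_column_choose {R : Type*} [CommSemiring R] (x y : R) (c n : ℕ) :
    ∑ i ∈ range (c + n), (if c ≤ i then (i.choose (i - c) : R) * x ^ (i - c) * y ^ (c + 1) else 0)
      = y ^ (c + 1) * ∑ k ∈ range n, ((k + c).choose k : R) * x ^ k := by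
  rw [sum_range_add, sum_eq_zero fun i hi => if_neg (by simpa using hi), zero_add, mul_sum]
  refine sum_congr rfl fun k _ => ?_
  rw [if_pos (Nat.le_add_right c k), Nat.add_sub_cancel_left, add_comm c k]
  ring

theorem Lm_column_sum_recurrence_general (p : ℝ) (q : ℝ) (hq : q = 1 - p)
    (m : ℕ)
    (L : ℕ → ℕ → ℝ)
    (hL : ∀ i j, L i j = if j ≤ i then (i.choose (i - j) : ℝ) * p ^ (i - j) * q ^ (j + 1) else 0)
    (j : ℕ) (hj1 : 1 ≤ j) (hjm : j ≤ m) :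
    ∑ i ∈ range (m + 1), L i j
      = ∑ i ∈ range (m + 1), L i (j - 1)
        - ((m + 1).choose (m - j + 1) : ℝ) * p ^ (m - j + 1) * q ^ j := by
  obtain ⟨c, rfl⟩ : ∃ c, j = c + 1 := ⟨j - 1, by omega⟩
  obtain ⟨n, rfl⟩ : ∃ n, m = c + 1 + n := ⟨m - (c + 1), by omega⟩
  subst hq
  simp only [hL, Nat.add_sub_cancel, Nat.add_sub_cancel_left]
  rw [show c + 1 + n + 1 = (c + 1) + (n + 1) by ring, sum_range_column_choose,
    show (c + 1) + (n + 1) = c + (n + 2) by ring, sum_range_column_choose]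
  simp only [← add_assoc _ c 1]
  rw [pow_succ, mul_assoc, one_sub_mul_sum_range_choose_mul_pow, show c + (n + 2) = n + c + 2 by ring]
  ring

/-- Column `j` of `L_m` sums to the sum of column `j-1` minus `C(m+1, m-j+1) p^{m-j+1} q^j`. -/
theorem Lm_column_sum_recurrence (p : ℝ) (hp : p ∈ Set.Ioo (0:ℝ) 1) (q : ℝ) (hq : q = 1 - p)
    (m : ℕ) (hm : 1 ≤ m)
    (L : ℕ → ℕ → ℝ)
    (hL : ∀ i j, L i j = if j ≤ i then (i.choose (i - j) : ℝ) * p ^ (i - j) * q ^ (j + 1) else 0)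
    (j : ℕ) (hj1 : 1 ≤ j) (hjm : j ≤ m) :
    ∑ i ∈ range (m + 1), L i j
      = ∑ i ∈ range (m + 1), L i (j - 1)
        - ((m + 1).choose (m - j + 1) : ℝ) * p ^ (m - j + 1) * q ^ j :=
  Lm_column_sum_recurrence_general p q hq m L hL j hj1 hjm
end

section
/- For the upper triangular matrix U_m, the sum of the entries in column j-1 equals the sum of the entries in column j minus C(m+1, j) q^{j} p^{m+1-j}, for 1 ≤ j ≤ m. -/
open Finset

lemma key_sum_identity (q : ℝ) (n : ℕ) : ∀ j : ℕ,
    ∑ k ∈ range (j+1), ((n+k).choose k : ℝ) * q^k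
      - (1-q) * ∑ k ∈ range j, ((n+1+k).choose k : ℝ) * q^k
      = ((n+j+1).choose j : ℝ) * q^j := by
  intro j
  induction j with
  | zero => simp
  | succ j ih =>
    rw [sum_range_succ, sum_range_succ, sum_range_succ]
    have e1 : (n+(j+1)+1).choose (j+1) = (n+j+1).choose j + (n+j+1).choose (j+1) := by
      rw [show n+(j+1)+1 = (n+j+1)+1 by omega]
      exact Nat.choose_succ_succ _ _
    have e2 : (n+1+j).choose j = (n+j+1).choose j := by rw [show n+1+j = n+j+1 by omega]
    rw [e2, e1, show n+(j+1)=n+j+1 from by omega]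
    push_cast
    rw [sum_range_succ] at ih
    linear_combination ih

lemma colsum (p q : ℝ) (m : ℕ) (U : ℕ → ℕ → ℝ)
    (hU : ∀ i j, U i j = if i ≤ j ∧ j ≤ m then
      ((m - i).choose (j - i) : ℝ) * p ^ (m + 1 - j) * q ^ (j - i) else 0)
    (j : ℕ) (hjm : j ≤ m) :
    ∑ i ∈ range (m + 1), U i j
      = p ^ (m + 1 - j) * ∑ k ∈ range (j+1), ((m - j + k).choose k : ℝ) * q^k := by
  have hsub : ∑ i ∈ range (m+1), U i j = ∑ i ∈ range (j+1), U i j := by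
    rw [← Finset.sum_subset (Finset.range_subset_range.mpr (by omega : j+1 ≤ m+1))]
    intro i _ hi
    simp only [mem_range, not_lt] at hi
    rw [hU]
    simp only [ite_eq_right_iff]
    intro ⟨h1, h2⟩; omega
  rw [hsub, ← Finset.sum_range_reflect, Finset.mul_sum]
  apply Finset.sum_congr rfl
  intro k hk
  simp only [mem_range] at hk
  rw [hU]
  have h1 : j + 1 - 1 - k ≤ j := by omega
  have h2 : m - (j + 1 - 1 - k) = m - j + k := by omega
  have h3 : j - (j + 1 - 1 - k) = k := by omega
  rw [if_pos ⟨h1, hjm⟩, h2, h3]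
  ring

/-- Column `j-1` of `U_m` sums to the sum of column `j` minus `C(m+1, j) q^j p^{m+1-j}`. -/
theorem Um_column_sum_recurrence (p : ℝ) (hp : p ∈ Set.Ioo (0:ℝ) 1) (q : ℝ) (hq : q = 1 - p)
    (m : ℕ) (hm : 1 ≤ m)
    (U : ℕ → ℕ → ℝ)
    (hU : ∀ i j, U i j = if i ≤ j ∧ j ≤ m then
      ((m - i).choose (j - i) : ℝ) * p ^ (m + 1 - j) * q ^ (j - i) else 0)
    (j : ℕ) (hj1 : 1 ≤ j) (hjm : j ≤ m) :
    ∑ i ∈ range (m + 1), U i (j - 1)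
      = ∑ i ∈ range (m + 1), U i j
        - ((m + 1).choose j : ℝ) * q ^ j * p ^ (m + 1 - j) := by
  set n := m - j with hn
  have hm1 : m + 1 - j = n + 1 := by omega
  have hm2 : m + 1 - (j - 1) = n + 2 := by omega
  have hj0 : j - 1 + 1 = j := by omega
  have hmj1 : m - (j - 1) = n + 1 := by omega
  rw [colsum p q m U hU (j-1) (by omega), colsum p q m U hU j hjm,
    hm1, hm2, hj0, hmj1, hn]
  have hch : (m + 1).choose j = (n + j + 1).choose j := by
    congr 1; omega
  rw [hch]
  have key := key_sum_identity q n j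
  rw [hq] at *
  have : (1 : ℝ) - (1 - p) = p := by ring
  rw [this] at key
  rw [← hn]
  linear_combination (-(p^(n+1))) * key
end

section
/- With U_m defined by (U_m)_{ij} = C(m-i, j-i) p^{m+1-j} q^{j-i} and P_m defined by (P_m)_{ij} = C(m-i, j-i), one has (U_m P_m)_{ij} = p^{m-j+1} (P_m)_{ij} for all 0 ≤ i, j ≤ m; that is, the columns of P_m are eigenvectors of U_m with eigenvalues p^{m+1}, p^{m}, ..., p. -/
/-!
Expanding `(U P)ᵢⱼ` and putting `k = i + t`, the subset-of-a-subset identity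
`C(m-i, t) C(m-i-t, j-i-t) = C(m-i, j-i) C(j-i, t)` turns the sum into
`C(m-i, j-i) p^(m+1-j) (p+q)^(j-i)` by the binomial theorem, and `p + q = 1`.
-/

open Matrix Finset

theorem sum_choose_mul_choose_mul_pow {R : Type*} [CommSemiring R] (x y : R) (n d : ℕ) :
    ∑ t ∈ range (d + 1), (n.choose t * (n - t).choose (d - t) : R) * x ^ t * y ^ (d - t) =
      n.choose d * (x + y) ^ d := by
  rw [add_pow, mul_sum]
  refine sum_congr rfl fun t ht => ?_
  rw [← Nat.cast_mul, ← Nat.choose_mul (Nat.lt_succ_iff.mp (mem_range.mp ht))]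
  push_cast
  ring

theorem sum_ite_choose_mul_ite_choose {R : Type*} [CommSemiring R] (p q : R) {a b m : ℕ}
    (hbm : b ≤ m) :
    ∑ k ∈ range (m + 1),
      (if a ≤ k then ((m - a).choose (k - a) : R) * p ^ (m + 1 - k) * q ^ (k - a) else 0) *
        (if k ≤ b then ((m - k).choose (b - k) : R) else 0) =
      if a ≤ b then ((m - a).choose (b - a) : R) * p ^ (m + 1 - b) * (p + q) ^ (b - a) else 0 := by
  simp_rw [ite_zero_mul_ite_zero, ← mem_Icc, sum_ite_mem]
  split_ifs with hab
  · have hsub : Icc a b ⊆ range (m + 1) := fun k hk => by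
      simp only [mem_Icc, mem_range] at hk ⊢; omega
    rw [inter_eq_right.mpr hsub, ← Ico_add_one_right_eq_Icc, sum_Ico_eq_sum_range,
      Nat.sub_add_comm hab]
    calc _ = p ^ (m + 1 - b) * ∑ t ∈ range (b - a + 1),
          ((m - a).choose t * (m - a - t).choose (b - a - t) : R) * q ^ t * p ^ (b - a - t) := by
          rw [mul_sum]
          refine sum_congr rfl fun t ht => ?_
          have htba : t ≤ b - a := Nat.lt_succ_iff.mp (mem_range.mp ht)
          rw [show m + 1 - (a + t) = (b - a - t) + (m + 1 - b) by omega,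
            show m - (a + t) = m - a - t by omega, show b - (a + t) = b - a - t by omega,
            Nat.add_sub_cancel_left, pow_add]
          ring
      _ = _ := by rw [sum_choose_mul_choose_mul_pow, add_comm q]; ring
  · rw [Icc_eq_empty_of_lt (by omega)]
    simp

theorem Um_mul_Pm_general (p : ℝ) (q : ℝ) (hq : q = 1 - p)
    (m : ℕ)
    (U P : Matrix (Fin (m + 1)) (Fin (m + 1)) ℝ)
    (hU : ∀ i j : Fin (m + 1),
      U i j = if (i : ℕ) ≤ (j : ℕ) then ((m - (i : ℕ)).choose ((j : ℕ) - (i : ℕ)) : ℝ)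
        * p ^ (m + 1 - (j : ℕ)) * q ^ ((j : ℕ) - (i : ℕ)) else 0)
    (hP : ∀ i j : Fin (m + 1),
      P i j = if (i : ℕ) ≤ (j : ℕ) then ((m - (i : ℕ)).choose ((j : ℕ) - (i : ℕ)) : ℝ) else 0) :
    ∀ i j : Fin (m + 1), (U * P) i j = p ^ (m - (j : ℕ) + 1) * P i j := by
  intro i j
  have hj : (j : ℕ) ≤ m := j.is_le
  have hsum := sum_ite_choose_mul_ite_choose p q (a := i) hj
  rw [sum_range] at hsum
  simp_rw [mul_apply, hU, hP, hsum]
  rw [hq, add_sub_cancel, one_pow, mul_one, Nat.sub_add_comm hj, mul_ite, mul_zero, mul_comm]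

/-- The columns of the modal matrix `P_m` are eigenvectors of `U_m`:
`(U_m P_m)_{ij} = p^{m-j+1} (P_m)_{ij}`. -/
theorem Um_mul_Pm (p : ℝ) (hp : p ∈ Set.Ioo (0:ℝ) 1) (q : ℝ) (hq : q = 1 - p)
    (m : ℕ) (hm : 1 ≤ m)
    (U P : Matrix (Fin (m + 1)) (Fin (m + 1)) ℝ)
    (hU : ∀ i j : Fin (m + 1),
      U i j = if (i : ℕ) ≤ (j : ℕ) then ((m - (i : ℕ)).choose ((j : ℕ) - (i : ℕ)) : ℝ)
        * p ^ (m + 1 - (j : ℕ)) * q ^ ((j : ℕ) - (i : ℕ)) else 0)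
    (hP : ∀ i j : Fin (m + 1),
      P i j = if (i : ℕ) ≤ (j : ℕ) then ((m - (i : ℕ)).choose ((j : ℕ) - (i : ℕ)) : ℝ) else 0) :
    ∀ i j : Fin (m + 1), (U * P) i j = p ^ (m - (j : ℕ) + 1) * P i j :=
  Um_mul_Pm_general p q hq m U P hU hP
end

section
/- Let P_m be the matrix with (P_m)_{ij} = C(m-i, j-i), and L_m the matrix with (L_m)_{ij} = C(i, i-j) p^{i-j} q^{j+1}. Then P_m^{-1} L_m P_m = T_m where (T_m)_{ij} = C(i, j) p^{i-j} q^{m+1-i}; equivalently, L_m P_m = P_m T_m. -/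
/-!
Encode row `k` of a matrix `B` by the polynomial `∑ⱼ B k j Xʲ`; then row `i` of `A * B` is
encoded by `∑ₖ A i k • (row k of B)`. Row `k` of `P` is `Xᵏ (1 + X)^(m - k)` and row `k` of `T` is
`q^(m + 1 - k) (X + p)ᵏ`, and by the binomial theorem (with `p + q = 1`) row `i` of both `L * P`
and `P * T` is `q (X + p)ⁱ (1 + X)^(m - i)`.
-/

open Matrix Polynomial Finset

theorem Matrix.mul_apply_eq_coeff_sum {R l m : Type*} [Semiring R] [Fintype m] {n : ℕ}
    (A : Matrix l m R) (B : Matrix m (Fin n) R) (f : m → R[X])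
    (hB : ∀ k j, B k j = (f k).coeff j) (i : l) (j : Fin n) :
    (A * B) i j = (∑ k, C (A i k) * f k).coeff j := by
  simp only [mul_apply, finsetSum_coeff, coeff_C_mul, hB]

theorem Fin.sum_ite_le_eq_sum_range {M : Type*} [AddCommMonoid M] (g : ℕ → M) {i m : ℕ}
    (hi : i ≤ m) :
    ∑ k : Fin (m + 1), (if (k : ℕ) ≤ i then g k else 0) = ∑ k ∈ range (i + 1), g k := by
  rw [Fin.sum_univ_eq_sum_range (fun k => if k ≤ i then g k else 0), ← sum_filter]
  congr 1
  ext k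
  simp only [mem_filter, mem_range]
  omega

theorem Fin.sum_ite_ge_eq_sum_range {M : Type*} [AddCommMonoid M] (g : ℕ → M) {i m : ℕ}
    (hi : i ≤ m) :
    ∑ k : Fin (m + 1), (if i ≤ (k : ℕ) then g (k - i) else 0) = ∑ t ∈ range (m - i + 1), g t := by
  rw [Fin.sum_univ_eq_sum_range (fun k => if i ≤ k then g (k - i) else 0), ← sum_filter,
    show (range (m + 1)).filter (i ≤ ·) = Ico i (m + 1) by ext; simp; omega,
    sum_Ico_eq_sum_range, show m + 1 - i = m - i + 1 by omega]
  simp only [Nat.add_sub_cancel_left]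

section Polynomial

variable {R : Type*} [CommSemiring R] (p q : R) (hpq : p + q = 1)
include hpq

theorem sum_choose_mul_X_pow_mul_one_add_X_pow {i m : ℕ} (hi : i ≤ m) :
    ∑ k ∈ range (i + 1), C ((i.choose (i - k) : R) * p ^ (i - k) * q ^ (k + 1)) *
      (X ^ k * (1 + X) ^ (m - k)) = C q * (X + C p) ^ i * (1 + X) ^ (m - i) := by
  have hX : X + C p = C q * X + C p * (1 + X) := by
    rw [show C q * X + C p * (1 + X) = (C p + C q) * X + C p by ring, ← C_add, hpq, C_1,
      one_mul]
  rw [hX, add_pow, mul_sum, sum_mul]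
  refine sum_congr rfl fun k hk => ?_
  have hki : k ≤ i := Nat.lt_succ_iff.mp (mem_range.mp hk)
  rw [Nat.choose_symm hki, show m - k = (m - i) + (i - k) by omega]
  simp only [map_mul, map_pow, map_natCast, mul_pow]
  ring

theorem sum_choose_mul_X_add_C_pow {i m : ℕ} (hi : i ≤ m) :
    ∑ t ∈ range (m - i + 1), C (((m - i).choose t : R) * q ^ (m + 1 - (i + t))) *
      (X + C p) ^ (i + t) = C q * (X + C p) ^ i * (1 + X) ^ (m - i) := by
  have hX : (1 + X : R[X]) = X + C p + C q := by rw [add_assoc, ← C_add, hpq, C_1, add_comm]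
  rw [hX, add_pow (X + C p) (C q), mul_sum]
  refine sum_congr rfl fun t ht => ?_
  have hti : t ≤ m - i := Nat.lt_succ_iff.mp (mem_range.mp ht)
  rw [show m + 1 - (i + t) = (m - i - t) + 1 by omega]
  simp only [map_mul, map_pow, map_natCast]
  ring

end Polynomial

theorem Lm_conjugate_general (p : ℝ) (q : ℝ) (hq : q = 1 - p)
    (m : ℕ)
    (L P T : Matrix (Fin (m + 1)) (Fin (m + 1)) ℝ)
    (hL : ∀ i j : Fin (m + 1),
      L i j = if (j : ℕ) ≤ (i : ℕ) then ((i : ℕ).choose ((i : ℕ) - (j : ℕ)) : ℝ)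
        * p ^ ((i : ℕ) - (j : ℕ)) * q ^ ((j : ℕ) + 1) else 0)
    (hP : ∀ i j : Fin (m + 1),
      P i j = if (i : ℕ) ≤ (j : ℕ) then ((m - (i : ℕ)).choose ((j : ℕ) - (i : ℕ)) : ℝ) else 0)
    (hT : ∀ i j : Fin (m + 1),
      T i j = ((i : ℕ).choose (j : ℕ) : ℝ) * p ^ ((i : ℕ) - (j : ℕ)) * q ^ (m + 1 - (i : ℕ))) :
    L * P = P * T := by
  have hpq : p + q = 1 := by rw [hq]; ring
  have hProw : ∀ k j : Fin (m + 1), P k j = (X ^ (k : ℕ) * (1 + X) ^ (m - k)).coeff j := fun k j => by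
    rw [hP, coeff_X_pow_mul', coeff_one_add_X_pow]
  have hTrow : ∀ k j : Fin (m + 1),
      T k j = (C (q ^ (m + 1 - k)) * (X + C p) ^ (k : ℕ)).coeff j := fun k j => by
    rw [hT, coeff_C_mul, coeff_X_add_C_pow]
    ring
  ext i j
  have hi : (i : ℕ) ≤ m := Nat.lt_succ_iff.mp i.isLt
  rw [mul_apply_eq_coeff_sum L P _ hProw, mul_apply_eq_coeff_sum P T _ hTrow]
  congr 1
  calc ∑ k, C (L i k) * (X ^ (k : ℕ) * (1 + X) ^ (m - k))
      = C q * (X + C p) ^ (i : ℕ) * (1 + X) ^ (m - i) := by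
        rw [← sum_choose_mul_X_pow_mul_one_add_X_pow p q hpq hi,
          ← Fin.sum_ite_le_eq_sum_range _ hi]
        refine sum_congr rfl fun k _ => ?_
        rw [hL]
        split_ifs <;> simp
    _ = ∑ k, C (P i k) * (C (q ^ (m + 1 - k)) * (X + C p) ^ (k : ℕ)) := by
        rw [← sum_choose_mul_X_add_C_pow p q hpq hi, ← Fin.sum_ite_ge_eq_sum_range _ hi]
        refine sum_congr rfl fun k _ => ?_
        rw [hP]
        split_ifs with hik
        · rw [Nat.add_sub_cancel' hik]
          simp [mul_assoc]
        · simp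

/-- Conjugating `L_m` by the modal matrix `P_m` gives `T_m`:  `L_m P_m = P_m T_m`
(equivalently `P_m⁻¹ L_m P_m = T_m`). -/
theorem Lm_conjugate (p : ℝ) (hp : p ∈ Set.Ioo (0:ℝ) 1) (q : ℝ) (hq : q = 1 - p)
    (m : ℕ) (hm : 1 ≤ m)
    (L P T : Matrix (Fin (m + 1)) (Fin (m + 1)) ℝ)
    (hL : ∀ i j : Fin (m + 1),
      L i j = if (j : ℕ) ≤ (i : ℕ) then ((i : ℕ).choose ((i : ℕ) - (j : ℕ)) : ℝ)
        * p ^ ((i : ℕ) - (j : ℕ)) * q ^ ((j : ℕ) + 1) else 0)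
    (hP : ∀ i j : Fin (m + 1),
      P i j = if (i : ℕ) ≤ (j : ℕ) then ((m - (i : ℕ)).choose ((j : ℕ) - (i : ℕ)) : ℝ) else 0)
    (hT : ∀ i j : Fin (m + 1),
      T i j = ((i : ℕ).choose (j : ℕ) : ℝ) * p ^ ((i : ℕ) - (j : ℕ)) * q ^ (m + 1 - (i : ℕ))) :
    L * P = P * T :=
  Lm_conjugate_general p q hq m L P T hL hP hT
end

section
/- Let X_n, Y_n be the interval endpoints of the arithmetic coder after n i.i.d. Bernoulli(p) bits. Then the expected interval length satisfies E[Y_n − X_n] = (1 − 2pq)ⁿ = (2p² − 2p + 1)ⁿ for all n ≥ 0. -/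
open MeasureTheory ProbabilityTheory

/-!
Each bit multiplies the interval length by `p` (bit 1) or by `q` (bit 0), so `Yₙ - Xₙ` is the
product of `n` independent factors, each of mean `p·p + q·q = 1 - 2pq`.
-/

theorem interval_length_eq_prod (q : ℝ) (b : ℕ → Bool) (x y : ℕ → ℝ)
    (hx0 : x 0 = 0) (hy0 : y 0 = 1)
    (hstep : ∀ n, (x (n + 1), y (n + 1)) =
      if b n then (x n + q * (y n - x n), y n) else (x n, x n + q * (y n - x n)))
    (n : ℕ) : y n - x n = ∏ k ∈ Finset.range n, if b k then 1 - q else q := by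
  induction n with
  | zero => simp [hx0, hy0]
  | succ n ih =>
    have hxy := hstep n
    rw [Finset.prod_range_succ, ← ih]
    cases hbn : b n <;>
      simp only [hbn, Bool.false_eq_true, if_true, if_false, Prod.ext_iff] at hxy ⊢ <;>
      rw [hxy.1, hxy.2] <;> ring

theorem integral_comp_bool {Ω : Type*} [MeasurableSpace Ω] {μ : Measure Ω}
    [IsProbabilityMeasure μ] {b : Ω → Bool} (hb : Measurable b) (f : Bool → ℝ) :
    ∫ ω, f (b ω) ∂μ = f false + (f true - f false) * μ.real {ω | b ω = true} := by
  have hset : MeasurableSet {ω | b ω = true} := hb (measurableSet_singleton true)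
  have hf : ∀ ω, f (b ω) =
      f false + (f true - f false) * {ω | b ω = true}.indicator 1 ω := by
    intro ω
    cases hbω : b ω <;> simp [Set.indicator, hbω]
  simp_rw [hf]
  rw [integral_add (integrable_const _) (((integrable_const 1).indicator hset).const_mul _),
    integral_const_mul, integral_indicator_one hset]
  simp

theorem ProbabilityTheory.iIndepFun.integral_prod_range_comp {Ω β : Type*}
    [MeasurableSpace Ω] [MeasurableSpace β]
    {μ : Measure Ω} {B : ℕ → Ω → β} (hB : iIndepFun B μ) (hBmeas : ∀ n, Measurable (B n))
    {f : β → ℝ} (hf : Measurable f) (n : ℕ) :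
    ∫ ω, ∏ k ∈ Finset.range n, f (B k ω) ∂μ = ∏ k ∈ Finset.range n, ∫ ω, f (B k ω) ∂μ := by
  simp_rw [← Fin.prod_univ_eq_prod_range]
  exact (hB.precomp Fin.val_injective).integral_fun_prod_comp (fun k ↦ (hBmeas k).aemeasurable)
    (fun _ ↦ hf.aestronglyMeasurable)

/-- The expected interval length after `n` i.i.d. Bernoulli(p) bits is
`(1-2pq)ⁿ = (2p²-2p+1)ⁿ`. -/
theorem expected_interval_length
    (p : ℝ) (hp : p ∈ Set.Ioo (0:ℝ) 1) (q : ℝ) (hq : q = 1 - p)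
    {Ω : Type*} [MeasurableSpace Ω] (μ : Measure Ω) [IsProbabilityMeasure μ]
    (B : ℕ → Ω → Bool) (hBmeas : ∀ n, Measurable (B n))
    (hBindep : iIndepFun B μ)
    (hBdist : ∀ n, μ {ω | B n ω = true} = ENNReal.ofReal p)
    (X Y : ℕ → Ω → ℝ)
    (hX0 : ∀ ω, X 0 ω = 0) (hY0 : ∀ ω, Y 0 ω = 1)
    (hstep : ∀ n ω, (X (n + 1) ω, Y (n + 1) ω) =
      if B n ω then (X n ω + q * (Y n ω - X n ω), Y n ω)
      else (X n ω, X n ω + q * (Y n ω - X n ω))) :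
    ∀ n, (∫ ω, (Y n ω - X n ω) ∂μ) = (1 - 2 * p * q) ^ n ∧
      (1 - 2 * p * q) ^ n = (2 * p ^ 2 - 2 * p + 1) ^ n := by
  set factor : Bool → ℝ := fun b ↦ if b then 1 - q else q
  have hfactor_mean : ∀ k, ∫ ω, factor (B k ω) ∂μ = 1 - 2 * p * q := by
    intro k
    rw [integral_comp_bool (hBmeas k), measureReal_def, hBdist, ENNReal.toReal_ofReal hp.1.le]
    simp only [factor, if_true, Bool.false_eq_true, if_false, hq]
    ring
  intro n
  refine ⟨?_, by rw [hq]; ring⟩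
  calc ∫ ω, (Y n ω - X n ω) ∂μ
      = ∫ ω, ∏ k ∈ Finset.range n, factor (B k ω) ∂μ :=
        integral_congr_ae (.of_forall fun ω ↦
          interval_length_eq_prod q (B · ω) (X · ω) (Y · ω) (hX0 ω) (hY0 ω) (hstep · ω) n)
    _ = ∏ k ∈ Finset.range n, ∫ ω, factor (B k ω) ∂μ :=
        hBindep.integral_prod_range_comp hBmeas measurable_from_top n
    _ = (1 - 2 * p * q) ^ n := by simp [hfactor_mean]
end

section
/- Let (X_n, Y_n) be the arithmetic coding interval endpoints under i.i.d. Bernoulli(p) bits. Then the vector of second mixed moments satisfies the linear recurrence (E[X_{n+1}²], E[X_{n+1}Y_{n+1}], E[Y_{n+1}²])ᵀ = W_2 · (E[X_n²], E[X_nY_n], E[Y_n²])ᵀ, where W_2 = [[p³+q, 2p²q, pq²], [pq, p²+q², pq], [p²q, 2pq², p+q³]]. -/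
/-!
Write `Z n = (X n, Y n)`. The bit `B n` is independent of `Z n`, a function of the earlier bits,
and the vector `(x², xy, y²)` of the new endpoints is obtained from that of the old ones by a
matrix depending only on the bit, since each new endpoint is `x`, `y` or `p x + q y`. Averaging the
two matrices with weights `p` and `q` gives `W₂`.
-/

open MeasureTheory ProbabilityTheory Matrix

section

variable {Ω : Type*} [MeasurableSpace Ω] {μ : Measure Ω}

theorem MeasureTheory.Integrable.mulVec {m n : Type*} [Fintype m] [Fintype n] {f : Ω → n → ℝ}
    (hf : Integrable f μ) (M : Matrix m n ℝ) : Integrable (fun ω => M *ᵥ f ω) μ :=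
  (Matrix.mulVecLin M).toContinuousLinearMap.integrable_comp hf

theorem integral_mulVec {m n : Type*} [Fintype m] [Fintype n] (M : Matrix m n ℝ)
    {f : Ω → n → ℝ} (hf : Integrable f μ) :
    ∫ ω, M *ᵥ f ω ∂μ = M *ᵥ ∫ ω, f ω ∂μ :=
  (Matrix.mulVecLin M).toContinuousLinearMap.integral_comp_comm hf

theorem integral_eq_sum_smul_of_indepFun {β E V : Type*} [Fintype β] [MeasurableSpace β]
    [MeasurableSingletonClass β] [MeasurableSpace E] [NormedAddCommGroup V] [NormedSpace ℝ V]
    {b : Ω → β} {Z : Ω → E} (hbZ : IndepFun b Z μ) (hb : Measurable b) (hZ : Measurable Z)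
    {F : β → E → V} (hF : ∀ c, StronglyMeasurable (F c))
    (hFZ : ∀ c, Integrable (fun ω => F c (Z ω)) μ) :
    ∫ ω, F (b ω) (Z ω) ∂μ = ∑ c, μ.real {ω | b ω = c} • ∫ ω, F c (Z ω) ∂μ := by
  have hset : ∀ c, MeasurableSet[MeasurableSpace.comap b inferInstance] {ω | b ω = c} :=
    fun c => ⟨{c}, measurableSet_singleton c, rfl⟩
  have hsplit : ∀ ω, F (b ω) (Z ω) = ∑ c, {ω | b ω = c}.indicator (fun ω => F c (Z ω)) ω := by
    classical
    simp [Set.indicator_apply]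
  rw [integral_congr_ae (Filter.Eventually.of_forall hsplit),
    integral_finsetSum _ fun c _ => (hFZ c).indicator (hb.comap_le _ (hset c))]
  refine Finset.sum_congr rfl fun c _ => ?_
  rw [integral_indicator (hb.comap_le _ (hset c))]
  exact ((IndepFun_iff_Indep b Z μ).1 hbZ).setIntegral_eq_smul hb.comap_le hZ.aemeasurable
    (hset c) (hF c).aestronglyMeasurable

theorem measureReal_setOf_eq_false [IsProbabilityMeasure μ] {b : Ω → Bool} (hb : Measurable b) :
    μ.real {ω | b ω = false} = 1 - μ.real {ω | b ω = true} := by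
  simp only [Bool.eq_false_iff]
  rw [← Set.compl_ofPred, measureReal_compl (s := {ω | b ω = true})
    (hb (measurableSet_singleton true)), probReal_univ]

end

section Recursion

variable {Ω β E : Type*} {B : ℕ → Ω → β} {Z : ℕ → Ω → E} {T : β → E → E} {z₀ : E}

theorem mem_of_recursion {S : Set E} (hT : ∀ b, Set.MapsTo (T b) S S) (hz₀ : z₀ ∈ S)
    (h0 : ∀ ω, Z 0 ω = z₀) (hsucc : ∀ n ω, Z (n + 1) ω = T (B n ω) (Z n ω)) (n : ℕ) (ω : Ω) :
    Z n ω ∈ S := by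
  induction n with
  | zero => exact h0 ω ▸ hz₀
  | succ n ih => exact hsucc n ω ▸ hT _ ih

theorem exists_eq_comp_of_recursion (h0 : ∀ ω, Z 0 ω = z₀)
    (hsucc : ∀ n ω, Z (n + 1) ω = T (B n ω) (Z n ω)) (n : ℕ) :
    ∃ g : (Finset.range n → β) → E, Z n = fun ω => g fun i => B i ω := by
  induction n with
  | zero => exact ⟨fun _ => z₀, funext h0⟩
  | succ n ih =>
    obtain ⟨g, hg⟩ := ih
    refine ⟨fun v => T (v ⟨n, Finset.self_mem_range_succ n⟩)
      (g fun i => v ⟨i, Finset.range_subset_range.2 (Nat.le_succ n) i.2⟩), ?_⟩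
    funext ω
    rw [hsucc, hg]

variable [MeasurableSpace Ω] [MeasurableSpace β] [Countable β] [MeasurableSingletonClass β]
  [MeasurableSpace E]

theorem measurable_of_recursion (hB : ∀ n, Measurable (B n)) (h0 : ∀ ω, Z 0 ω = z₀)
    (hsucc : ∀ n ω, Z (n + 1) ω = T (B n ω) (Z n ω)) (n : ℕ) : Measurable (Z n) := by
  obtain ⟨g, hg⟩ := exists_eq_comp_of_recursion h0 hsucc n
  rw [hg]
  exact (measurable_of_countable g).comp (measurable_pi_lambda _ fun i => hB i)

theorem indepFun_of_recursion {μ : Measure Ω} (hind : iIndepFun B μ)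
    (hB : ∀ n, Measurable (B n)) (h0 : ∀ ω, Z 0 ω = z₀)
    (hsucc : ∀ n ω, Z (n + 1) ω = T (B n ω) (Z n ω)) (n : ℕ) : IndepFun (B n) (Z n) μ := by
  obtain ⟨g, hg⟩ := exists_eq_comp_of_recursion h0 hsucc n
  rw [hg]
  exact (hind.indepFun_finset {n} (Finset.range n) (by simp) hB).comp
    (measurable_of_countable fun v => v ⟨n, Finset.mem_singleton_self n⟩)
    (measurable_of_countable g)

end Recursion

namespace ArithmeticCoding

def step (q : ℝ) (b : Bool) (z : ℝ × ℝ) : ℝ × ℝ :=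
  if b then (z.1 + q * (z.2 - z.1), z.2) else (z.1, z.1 + q * (z.2 - z.1))

def subintervals : Set (ℝ × ℝ) := {z | 0 ≤ z.1 ∧ z.1 ≤ z.2 ∧ z.2 ≤ 1}

def secondMoments (z : ℝ × ℝ) : Fin 3 → ℝ := ![z.1 ^ 2, z.1 * z.2, z.2 ^ 2]

def stepMatrix (p q : ℝ) : Bool → Matrix (Fin 3) (Fin 3) ℝ
  | true => !![p ^ 2, 2 * p * q, q ^ 2; 0, p, q; 0, 0, 1]
  | false => !![1, 0, 0; p, q, 0; p ^ 2, 2 * p * q, q ^ 2]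

@[fun_prop]
theorem continuous_secondMoments : Continuous secondMoments :=
  continuous_pi fun i => by fin_cases i <;> simp only [secondMoments] <;> fun_prop

theorem integral_secondMoments {Ω : Type*} [MeasurableSpace Ω] {μ : Measure Ω} {f : Ω → ℝ × ℝ}
    (hf : Integrable (fun ω => secondMoments (f ω)) μ) :
    ∫ ω, secondMoments (f ω) ∂μ
      = ![∫ ω, (f ω).1 ^ 2 ∂μ, ∫ ω, (f ω).1 * (f ω).2 ∂μ, ∫ ω, (f ω).2 ^ 2 ∂μ] := by
  ext i
  rw [eval_integral fun j => hf.eval j]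
  fin_cases i <;> rfl

variable {p q : ℝ}

theorem mapsTo_step (hq : q ∈ Set.Icc (0 : ℝ) 1) (b : Bool) :
    Set.MapsTo (step q b) subintervals subintervals := by
  rintro z ⟨h0, hxy, hy1⟩
  obtain ⟨hq0, hq1⟩ := hq
  cases b <;> simp only [step, Bool.false_eq_true, ↓reduceIte] <;> refine ⟨?_, ?_, ?_⟩ <;>
    dsimp only <;> nlinarith

theorem norm_secondMoments_le_one {z : ℝ × ℝ} (hz : z ∈ subintervals) :
    ‖secondMoments z‖ ≤ 1 := by
  obtain ⟨h0, hxy, hy1⟩ := hz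
  refine (pi_norm_le_iff_of_nonneg zero_le_one).2 fun i => ?_
  rw [Real.norm_eq_abs, abs_le]
  fin_cases i <;> constructor <;> dsimp [secondMoments] <;> nlinarith

theorem secondMoments_step (hq : q = 1 - p) (b : Bool) (z : ℝ × ℝ) :
    secondMoments (step q b z) = stepMatrix p q b *ᵥ secondMoments z := by
  subst hq
  ext i
  cases b <;> fin_cases i <;>
    simp [step, secondMoments, stepMatrix, mulVec, dotProduct, Fin.sum_univ_three] <;> ring

theorem smul_stepMatrix_add_smul_stepMatrix (hq : q = 1 - p) :
    p • stepMatrix p q true + q • stepMatrix p q false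
      = !![p ^ 3 + q, 2 * p ^ 2 * q, p * q ^ 2;
          p * q, p ^ 2 + q ^ 2, p * q;
          p ^ 2 * q, 2 * p * q ^ 2, p + q ^ 3] := by
  subst hq
  ext i j
  fin_cases i <;> fin_cases j <;> simp [stepMatrix] <;> ring

variable {Ω : Type*} [MeasurableSpace Ω] {μ : Measure Ω} [IsProbabilityMeasure μ]
  {B : ℕ → Ω → Bool} {Z : ℕ → Ω → ℝ × ℝ} {z₀ : ℝ × ℝ}

theorem integrable_secondMoments (hq01 : q ∈ Set.Icc (0 : ℝ) 1) (hB : ∀ n, Measurable (B n))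
    (hz₀ : z₀ ∈ subintervals) (h0 : ∀ ω, Z 0 ω = z₀)
    (hsucc : ∀ n ω, Z (n + 1) ω = step q (B n ω) (Z n ω)) (n : ℕ) :
    Integrable (fun ω => secondMoments (Z n ω)) μ :=
  .of_bound (continuous_secondMoments.measurable.comp
      (measurable_of_recursion hB h0 hsucc n)).aestronglyMeasurable 1
    (.of_forall fun ω => norm_secondMoments_le_one
      (mem_of_recursion (mapsTo_step hq01) hz₀ h0 hsucc n ω))

theorem integral_secondMoments_succ (hq : q = 1 - p) (hq01 : q ∈ Set.Icc (0 : ℝ) 1)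
    (hind : iIndepFun B μ) (hB : ∀ n, Measurable (B n)) (hBp : ∀ n, μ.real {ω | B n ω = true} = p)
    (hz₀ : z₀ ∈ subintervals) (h0 : ∀ ω, Z 0 ω = z₀)
    (hsucc : ∀ n ω, Z (n + 1) ω = step q (B n ω) (Z n ω)) (n : ℕ) :
    ∫ ω, secondMoments (Z (n + 1) ω) ∂μ
      = (p • stepMatrix p q true + q • stepMatrix p q false) *ᵥ ∫ ω, secondMoments (Z n ω) ∂μ := by
  have hint := integrable_secondMoments (μ := μ) hq01 hB hz₀ h0 hsucc n
  calc ∫ ω, secondMoments (Z (n + 1) ω) ∂μ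
      = ∫ ω, stepMatrix p q (B n ω) *ᵥ secondMoments (Z n ω) ∂μ := by
        simp only [hsucc, secondMoments_step hq]
    _ = ∑ c, μ.real {ω | B n ω = c} • ∫ ω, stepMatrix p q c *ᵥ secondMoments (Z n ω) ∂μ :=
        integral_eq_sum_smul_of_indepFun (F := fun c z => stepMatrix p q c *ᵥ secondMoments z)
          (indepFun_of_recursion hind hB h0 hsucc n) (hB n)
          (measurable_of_recursion hB h0 hsucc n)
          (fun _ => (continuous_const.matrix_mulVec continuous_secondMoments).stronglyMeasurable)
          (fun c => hint.mulVec (stepMatrix p q c))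
    _ = _ := by
        simp [measureReal_setOf_eq_false (hB n), hBp, ← hq, integral_mulVec _ hint, add_mulVec,
          smul_mulVec]

end ArithmeticCoding

open ArithmeticCoding in
/-- The vector of second mixed moments satisfies
`(E[X²], E[XY], E[Y²])ᵀ(n+1) = W₂ · (E[X²], E[XY], E[Y²])ᵀ(n)`. -/
theorem second_moments_recurrence
    (p : ℝ) (hp : p ∈ Set.Ioo (0:ℝ) 1) (q : ℝ) (hq : q = 1 - p)
    {Ω : Type*} [MeasurableSpace Ω] (μ : Measure Ω) [IsProbabilityMeasure μ]
    (B : ℕ → Ω → Bool) (hBmeas : ∀ n, Measurable (B n))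
    (hBindep : iIndepFun B μ)
    (hBdist : ∀ n, μ {ω | B n ω = true} = ENNReal.ofReal p)
    (X Y : ℕ → Ω → ℝ)
    (hX0 : ∀ ω, X 0 ω = 0) (hY0 : ∀ ω, Y 0 ω = 1)
    (hstep : ∀ n ω, (X (n + 1) ω, Y (n + 1) ω) =
      if B n ω then (X n ω + q * (Y n ω - X n ω), Y n ω)
      else (X n ω, X n ω + q * (Y n ω - X n ω))) :
    ∀ n, ![∫ ω, (X (n + 1) ω) ^ 2 ∂μ, ∫ ω, X (n + 1) ω * Y (n + 1) ω ∂μ,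
            ∫ ω, (Y (n + 1) ω) ^ 2 ∂μ]
      = (!![p ^ 3 + q, 2 * p ^ 2 * q, p * q ^ 2;
            p * q, p ^ 2 + q ^ 2, p * q;
            p ^ 2 * q, 2 * p * q ^ 2, p + q ^ 3]).mulVec
          ![∫ ω, (X n ω) ^ 2 ∂μ, ∫ ω, X n ω * Y n ω ∂μ, ∫ ω, (Y n ω) ^ 2 ∂μ] := by
  intro n
  set Z : ℕ → Ω → ℝ × ℝ := fun n ω => (X n ω, Y n ω)
  have hZ0 : ∀ ω, Z 0 ω = (0, 1) := fun ω => by simp [Z, hX0, hY0]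
  have hq01 : q ∈ Set.Icc (0 : ℝ) 1 := by constructor <;> linarith [hp.1, hp.2]
  have hBp : ∀ n, μ.real {ω | B n ω = true} = p := fun n => by
    rw [measureReal_def, hBdist, ENNReal.toReal_ofReal hp.1.le]
  have hz₀ : ((0, 1) : ℝ × ℝ) ∈ subintervals := by simp [subintervals]
  have hint := integrable_secondMoments (μ := μ) hq01 hBmeas hz₀ hZ0 hstep
  rw [← smul_stepMatrix_add_smul_stepMatrix hq, ← integral_secondMoments (hint n),
    ← integral_secondMoments (hint (n + 1))]
  exact integral_secondMoments_succ hq hq01 hBindep hBmeas hBp hz₀ hZ0 hstep n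
end
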